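/- Let T be a tree with order p and diameter d ≥ 2, and let ε = ε(T). Suppose there exists a linear order u_0, u_1, ..., u_{p-1} of the vertices of T such that (a) u_0 = w and u_{p-1} ∈ N(w) when W(T) = {w}, and {u_0, u_{p-1}} = {w, w'} when W(T) = {w, w'}; and (b) for all 0 ≤ i < j ≤ p-1, d(u_i, u_j) ≥ Σ_{t=i}^{j-1}(L(u_t) + L(u_{t+1})) - (j-i)(d+ε) + (d+1). Then rn(T) = (p-1)(d+ε) - 2L(T) + ε. -/

import Mathlib

namespace Radio

variable {V : Type*}

/-- The span of a labeling `f`: the maximum of `|f u - f v|` over all pairs of vertices. -/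
def span [Fintype V] (f : V → ℕ) : ℕ :=
  Finset.univ.sup fun p : V × V => ((f p.1 : ℤ) - (f p.2 : ℤ)).natAbs

/-- `f` is a radio labeling of `G`: `|f u - f v| ≥ diam G + 1 - d(u,v)` for all distinct `u, v`. -/
def IsRadioLabeling [Fintype V] (G : SimpleGraph V) (f : V → ℕ) : Prop :=
  ∀ u v : V, u ≠ v → G.diam + 1 ≤ G.dist u v + ((f u : ℤ) - (f v : ℤ)).natAbs

/-- The radio number of `G`: the minimum span of a radio labeling of `G`. -/
noncomputable def radioNumber [Fintype V] (G : SimpleGraph V) : ℕ :=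
  sInf { n | ∃ f : V → ℕ, IsRadioLabeling G f ∧ span f = n }

/-- The weight of `G` from a vertex `v`: `w_G(v) = ∑_u d(u, v)`. -/
noncomputable def weightFrom [Fintype V] (G : SimpleGraph V) (v : V) : ℕ :=
  ∑ u : V, G.dist u v

/-- The weight of `G`: the minimum of `w_G(v)` over all vertices `v`. -/
noncomputable def weight [Fintype V] (G : SimpleGraph V) : ℕ :=
  sInf (Set.range (weightFrom G))

/-- The set of weight centers of `G`: vertices minimizing `w_G(·)`. -/
def weightCenters [Fintype V] (G : SimpleGraph V) : Set V :=
  { v | ∀ x : V, weightFrom G v ≤ weightFrom G x }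

/-- The level of a vertex `u`: `L(u) = min { d(u, x) : x ∈ W(G) }`. -/
noncomputable def level [Fintype V] (G : SimpleGraph V) (u : V) : ℕ :=
  sInf (G.dist u '' weightCenters G)

/-- The total level of `G`: `L(G) = ∑_u L(u)`. -/
noncomputable def totalLevel [Fintype V] (G : SimpleGraph V) : ℕ :=
  ∑ u : V, level G u

/-- `ε(G) = 1` if `G` has exactly one weight center, and `0` otherwise
(for a tree the other case is exactly that of two adjacent weight centers). -/
noncomputable def epsilon [Fintype V] (G : SimpleGraph V) : ℕ :=
  if (weightCenters G).ncard = 1 then 1 else 0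


/-!
Lower bound: list the vertices by increasing label. The nearest weight centres of two vertices
coincide or are adjacent, so `d(x, y) ≤ L(x) + L(y) + 1 - ε`, and consecutive labels differ by at
least `d + ε - L(x) - L(y)`. Summing, the span is at least
`(p - 1)(d + ε) - 2 L(T) + L(first) + L(last)`, and the two end levels add up to at least `ε`.
Upper bound: label the given order greedily with exactly these gaps; condition (b) says that this
is a radio labeling, and condition (a) makes the two end levels add up to exactly `ε`.

Weight centres are equal or adjacent because across an edge `xy`,
`w(x) - w(y) = p - 2 #{z | z is closer to x than to y}`, while along a path of length at least
two the sets of this kind at the two end edges are disjoint and both miss the second vertex.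
-/

end Radio

namespace SimpleGraph.IsTree

variable {V : Type*} {G : SimpleGraph V}

lemma eq_of_adj_of_dist_lt (hT : G.IsTree) {a b c z : V} (ha : G.Adj a b) (hc : G.Adj c b)
    (hza : G.dist z a < G.dist z b) (hzc : G.dist z c < G.dist z b) : a = c := by
  classical
  obtain ⟨r, hr, -⟩ := (hT.connected.preconnected z b).exists_path_of_dist
  -- a neighbour of `b` nearer to `z` lies on the path `r` from `z` to `b`, so it precedes `b`
  have hpen : ∀ x, G.Adj x b → G.dist z x < G.dist z b → x = r.penultimate := by
    intro x hx hzx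
    obtain ⟨q, hq, hql⟩ := (hT.connected.preconnected z x).exists_path_of_dist
    have hbq : b ∉ q.support := fun hb => by
      have := dist_le (q.takeUntil b hb)
      have := q.length_takeUntil_le_length hb
      omega
    exact hT.isAcyclic.eq_penultimate_of_adj_end hr hx.symm
      (hT.isAcyclic.mem_support_of_ne_mem_support_of_adj_of_isPath hr hq hx.symm hbq)
  rw [hpen a ha hza, hpen c hc hzc]

lemma dist_lt_of_adj_of_adj (hT : G.IsTree) {a b c z : V} (hab : G.Adj a b) (hbc : G.Adj b c)
    (hac : a ≠ c) (h : G.dist z a < G.dist z b) : G.dist z b < G.dist z c := by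
  by_contra! hcb
  have hcb' : G.dist z c < G.dist z b :=
    lt_of_le_of_ne hcb (hT.dist_ne_of_adj z hbc).symm
  exact hac (hT.eq_of_adj_of_dist_lt hab hbc.symm h hcb')

lemma dist_getVert_lt_succ_of_le (hT : G.IsTree) {a b z : V} {P : G.Walk a b} (hP : P.IsPath)
    {i j : ℕ} (hij : i ≤ j) (hj : j < P.length)
    (hi : G.dist z (P.getVert i) < G.dist z (P.getVert (i + 1))) :
    G.dist z (P.getVert j) < G.dist z (P.getVert (j + 1)) := by
  induction j, hij using Nat.le_induction with
  | base => exact hi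
  | succ j hij ih =>
    refine hT.dist_lt_of_adj_of_adj (P.adj_getVert_succ (by omega)) (P.adj_getVert_succ hj)
      (fun h => ?_) (ih (by omega))
    have := hP.getVert_injOn (by simp only [Set.mem_ofPred_eq]; omega)
      (by simp only [Set.mem_ofPred_eq]; omega) h
    omega

end SimpleGraph.IsTree

namespace Radio

open SimpleGraph Finset Function

variable {V : Type*} {G : SimpleGraph V} [Fintype V]

noncomputable def closerTo (G : SimpleGraph V) (x y : V) : Finset V :=
  {z | G.dist z x < G.dist z y}

lemma weightFrom_sub_weightFrom_of_adj (hT : G.IsTree) {x y : V} (h : G.Adj x y) :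
    (weightFrom G x : ℤ) - weightFrom G y = Fintype.card V - 2 * #(closerTo G x y) := by
  have hterm : ∀ z, (G.dist z x : ℤ) - G.dist z y =
      1 - 2 * if G.dist z x < G.dist z y then 1 else 0 := by
    intro z
    rcases hT.dist_eq_dist_add_one_of_adj z h with h' | h' <;> split_ifs <;> omega
  calc (weightFrom G x : ℤ) - weightFrom G y = ∑ z, ((G.dist z x : ℤ) - G.dist z y) := by
        simp [weightFrom, sum_sub_distrib]
    _ = ∑ z, (1 - 2 * if G.dist z x < G.dist z y then (1 : ℤ) else 0) :=
        sum_congr rfl fun z _ => hterm z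
    _ = Fintype.card V - 2 * #(closerTo G x y) := by
        rw [sum_sub_distrib, ← mul_sum, sum_boole]
        simp [closerTo]

lemma card_le_two_mul_card_closerTo (hT : G.IsTree) {x y : V} (hx : x ∈ weightCenters G)
    (h : G.Adj x y) : Fintype.card V ≤ 2 * #(closerTo G x y) := by
  have := weightFrom_sub_weightFrom_of_adj hT h
  have := hx y
  omega

lemma card_closerTo_snd_add_card_closerTo_penultimate_lt (hT : G.IsTree) {a b : V}
    {P : G.Walk a b} (hP : P.IsPath) (hlen : 2 ≤ P.length) :
    #(closerTo G a P.snd) + #(closerTo G b P.penultimate) < Fintype.card V := by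
  classical
  have hend : P.getVert (P.length - 1 + 1) = b := by
    rw [Nat.sub_add_cancel (by omega), P.getVert_length]
  have hfar : ∀ z i, i ≤ P.length - 1 →
      G.dist z (P.getVert i) < G.dist z (P.getVert (i + 1)) →
      z ∉ closerTo G b P.penultimate := by
    intro z i hi hz
    have := hT.dist_getVert_lt_succ_of_le hP hi (by omega) hz
    simp only [closerTo, mem_filter, mem_univ, true_and, not_lt, ← hend]
    exact this.le
  have hdisj : Disjoint (closerTo G a P.snd) (closerTo G b P.penultimate) :=
    disjoint_left.mpr fun z hz => hfar z 0 (Nat.zero_le _) (by simpa [closerTo] using hz)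
  have hsnd : P.snd ∉ closerTo G a P.snd ∪ closerTo G b P.penultimate := by
    have hadj : G.Adj P.snd (P.getVert 2) := P.adj_getVert_succ (by omega)
    rw [mem_union, not_or]
    exact ⟨by simp [closerTo], hfar _ 1 (by omega) (by simp [dist_eq_one_iff_adj.mpr hadj])⟩
  calc #(closerTo G a P.snd) + #(closerTo G b P.penultimate) + 1
      = #(insert P.snd (closerTo G a P.snd ∪ closerTo G b P.penultimate)) := by
        rw [card_insert_of_notMem hsnd, card_union_of_disjoint hdisj]
    _ ≤ Fintype.card V := card_le_univ _

lemma adj_of_mem_weightCenters (hT : G.IsTree) {a b : V} (ha : a ∈ weightCenters G)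
    (hb : b ∈ weightCenters G) (hab : a ≠ b) : G.Adj a b := by
  by_contra hnadj
  obtain ⟨P, hP, hPl⟩ := (hT.connected.preconnected a b).exists_path_of_dist
  have hlen : 2 ≤ P.length := by
    have := hT.connected.pos_dist_of_ne hab
    have : G.dist a b ≠ 1 := fun h => hnadj (dist_eq_one_iff_adj.mp h)
    omega
  have hnil : ¬ P.Nil := by rw [Walk.not_nil_iff_lt_length]; omega
  have := card_le_two_mul_card_closerTo hT ha (P.adj_snd hnil)
  have := card_le_two_mul_card_closerTo hT hb (P.adj_penultimate hnil).symm
  have := card_closerTo_snd_add_card_closerTo_penultimate_lt hT hP hlen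
  omega

lemma weightCenters_nonempty [Nonempty V] : (weightCenters G).Nonempty := by
  obtain ⟨w, -, hw⟩ := exists_min_image univ (weightFrom G) univ_nonempty
  exact ⟨w, fun x => hw x (mem_univ x)⟩

lemma weightCenters_eq_singleton_or_pair (hT : G.IsTree) :
    (∃ w, weightCenters G = {w}) ∨ ∃ w w', w ≠ w' ∧ weightCenters G = {w, w'} := by
  classical
  have := hT.connected.nonempty
  obtain ⟨w, hw⟩ := weightCenters_nonempty (G := G)
  by_cases hall : ∀ z ∈ weightCenters G, z = w
  · exact .inl ⟨w, Set.eq_singleton_iff_unique_mem.mpr ⟨hw, hall⟩⟩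
  push Not at hall
  obtain ⟨w', hw', hne⟩ := hall
  refine .inr ⟨w, w', hne.symm, Set.Subset.antisymm (fun z hz => ?_)
    (Set.insert_subset hw (Set.singleton_subset_iff.mpr hw'))⟩
  by_contra hz'
  simp only [Set.mem_insert_iff, Set.mem_singleton_iff, not_or] at hz'
  exact hT.isAcyclic.cliqueFree le_rfl {w, w', z} (is3Clique_triple_iff.mpr
    ⟨adj_of_mem_weightCenters hT hw hw' hne.symm,
      adj_of_mem_weightCenters hT hw hz (Ne.symm hz'.1),
      adj_of_mem_weightCenters hT hw' hz (Ne.symm hz'.2)⟩)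

lemma exists_mem_weightCenters_level_eq [Nonempty V] (x : V) :
    ∃ c ∈ weightCenters G, level G x = G.dist x c := by
  obtain ⟨c, hc, h⟩ := Nat.sInf_mem (weightCenters_nonempty.image (G.dist x))
  exact ⟨c, hc, h.symm⟩

lemma level_le_dist {x c : V} (hc : c ∈ weightCenters G) : level G x ≤ G.dist x c :=
  Nat.sInf_le (Set.mem_image_of_mem _ hc)

lemma level_eq_zero_iff (hconn : G.Connected) {x : V} :
    level G x = 0 ↔ x ∈ weightCenters G := by
  have := hconn.nonempty
  refine ⟨fun h => ?_, fun h => Nat.le_zero.mp (dist_self (G := G) ▸ level_le_dist h)⟩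
  obtain ⟨c, hc, hx⟩ := exists_mem_weightCenters_level_eq (G := G) x
  rw [h, eq_comm, hconn.dist_eq_zero_iff] at hx
  exact hx ▸ hc

lemma epsilon_le_one : epsilon G ≤ 1 := by
  unfold epsilon
  split_ifs <;> simp

lemma epsilon_eq_one_of_eq_singleton {w : V} (hW : weightCenters G = {w}) : epsilon G = 1 := by
  simp [epsilon, hW]

lemma epsilon_eq_zero_of_mem {a b : V} (ha : a ∈ weightCenters G) (hb : b ∈ weightCenters G)
    (hab : a ≠ b) : epsilon G = 0 := by
  refine if_neg fun h => hab ?_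
  obtain ⟨w, hw⟩ := Set.ncard_eq_one.mp h
  rw [hw] at ha hb
  exact ha.trans hb.symm

lemma dist_add_epsilon_le (hT : G.IsTree) (x y : V) :
    G.dist x y + epsilon G ≤ level G x + level G y + 1 := by
  have := hT.connected.nonempty
  obtain ⟨c, hc, hx⟩ := exists_mem_weightCenters_level_eq (G := G) x
  obtain ⟨c', hc', hy⟩ := exists_mem_weightCenters_level_eq (G := G) y
  have hcc : G.dist c c' + epsilon G ≤ 1 := by
    by_cases h : c = c'
    · simpa [h] using epsilon_le_one
    · rw [dist_eq_one_iff_adj.mpr (adj_of_mem_weightCenters hT hc hc' h),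
        epsilon_eq_zero_of_mem hc hc' h]
  have h₁ := hT.connected.dist_triangle (u := x) (v := c) (w := y)
  have h₂ := hT.connected.dist_triangle (u := c) (v := c') (w := y)
  rw [dist_comm (u := c') (v := y)] at h₂
  omega

lemma epsilon_le_level_add_level (hT : G.IsTree) {x y : V} (hxy : x ≠ y) :
    epsilon G ≤ level G x + level G y := by
  by_contra! h
  have := epsilon_le_one (G := G)
  have hx : x ∈ weightCenters G := (level_eq_zero_iff hT.connected).mp (by omega)
  have hy : y ∈ weightCenters G := (level_eq_zero_iff hT.connected).mp (by omega)
  rw [epsilon_eq_zero_of_mem hx hy hxy] at h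
  omega

lemma ne_of_endpoints (hT : G.IsTree) {a b : V}
    (h₁ : ∀ w : V, weightCenters G = {w} → a = w ∧ G.Adj w b)
    (h₂ : ∀ w w' : V, w ≠ w' → weightCenters G = {w, w'} → ({a, b} : Set V) = {w, w'}) :
    a ≠ b := by
  rcases weightCenters_eq_singleton_or_pair hT with ⟨w, hW⟩ | ⟨w, w', hne, hW⟩
  · obtain ⟨rfl, hadj⟩ := h₁ w hW
    exact hadj.ne
  · rintro rfl
    have h := h₂ w w' hne hW
    rw [Set.pair_eq_singleton] at h
    have hw : w ∈ ({a} : Set V) := h ▸ Set.mem_insert _ _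
    have hw' : w' ∈ ({a} : Set V) := h ▸ Set.mem_insert_of_mem _ rfl
    exact hne (hw.trans hw'.symm)

lemma level_add_level_eq_epsilon_of_endpoints (hT : G.IsTree) {a b : V}
    (h₁ : ∀ w : V, weightCenters G = {w} → a = w ∧ G.Adj w b)
    (h₂ : ∀ w w' : V, w ≠ w' → weightCenters G = {w, w'} → ({a, b} : Set V) = {w, w'}) :
    level G a + level G b = epsilon G := by
  rcases weightCenters_eq_singleton_or_pair hT with ⟨w, hW⟩ | ⟨w, w', hne, hW⟩
  · obtain ⟨haw, hadj⟩ := h₁ w hW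
    have hw : w ∈ weightCenters G := by rw [hW]; rfl
    have ha : level G a = 0 := (level_eq_zero_iff hT.connected).mpr (haw ▸ hw)
    have hb₀ : level G b ≠ 0 := fun h => by
      have hb : b ∈ weightCenters G := (level_eq_zero_iff hT.connected).mp h
      rw [hW] at hb
      exact hadj.ne hb.symm
    have hb₁ : level G b ≤ 1 :=
      (level_le_dist hw).trans (dist_eq_one_iff_adj.mpr hadj.symm).le
    rw [epsilon_eq_one_of_eq_singleton hW]
    omega
  · have hmem : ∀ x ∈ ({a, b} : Set V), level G x = 0 := fun x hx =>
      (level_eq_zero_iff hT.connected).mpr (hW ▸ h₂ w w' hne hW ▸ hx)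
    have hw : w ∈ weightCenters G := by simp [hW]
    have hw' : w' ∈ weightCenters G := by simp [hW]
    rw [hmem a (by simp), hmem b (by simp), epsilon_eq_zero_of_mem hw hw' hne]

def IsOrdering (u : ℕ → V) : Prop :=
  ∀ v : V, ∃! i : ℕ, i < Fintype.card V ∧ u i = v

namespace IsOrdering

variable {u : ℕ → V}

lemma injOn (hu : IsOrdering u) : Set.InjOn u (Set.Iio (Fintype.card V)) :=
  fun _ hi j hj h => (hu (u j)).unique ⟨hi, h⟩ ⟨hj, rfl⟩

lemma sum_range_comp (hu : IsOrdering u) {M : Type*} [AddCommMonoid M] (F : V → M) :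
    ∑ t ∈ range (Fintype.card V), F (u t) = ∑ v, F v := by
  refine sum_nbij u (fun _ _ => mem_univ _) (by simpa using hu.injOn) (fun v _ => ?_)
    (fun _ _ => rfl)
  obtain ⟨i, ⟨hi, rfl⟩, -⟩ := hu v
  exact ⟨i, by simpa using hi, rfl⟩

lemma sum_sub_consecutive_eq [Nonempty V] (hu : IsOrdering u) (F : V → ℤ) (c : ℤ) :
    ∑ t ∈ range (Fintype.card V - 1), (c - (F (u t) + F (u (t + 1)))) =
      (Fintype.card V - 1) * c - 2 * ∑ v, F v + (F (u 0) + F (u (Fintype.card V - 1))) := by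
  obtain ⟨n, hn⟩ : ∃ n, Fintype.card V = n + 1 :=
    ⟨Fintype.card V - 1, (Nat.sub_add_cancel Fintype.card_pos).symm⟩
  have h := hu.sum_range_comp F
  have h' := h
  rw [hn, sum_range_succ] at h
  rw [hn, sum_range_succ'] at h'
  rw [hn, Nat.add_sub_cancel, sum_sub_distrib, sum_const, card_range, nsmul_eq_mul,
    sum_add_distrib]
  push_cast
  linarith

end IsOrdering

lemma exists_isOrdering_lt_of_lt [Nonempty V] {f : V → ℕ} (hf : Injective f) :
    ∃ y : ℕ → V, IsOrdering y ∧
      ∀ i j, i < j → j < Fintype.card V → f (y i) < f (y j) := by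
  classical
  set s := univ.image f
  have hs : #s = Fintype.card V := card_image_of_injective _ hf
  set e := s.orderEmbOfFin hs
  set y : ℕ → V := fun n => invFun f (if h : n < Fintype.card V then e ⟨n, h⟩ else 0)
  have hfy : ∀ n (h : n < Fintype.card V), f (y n) = e ⟨n, h⟩ := by
    intro n h
    obtain ⟨v, -, hv⟩ := mem_image.mp (s.orderEmbOfFin_mem hs ⟨n, h⟩)
    simp only [y, dif_pos h]
    exact invFun_eq ⟨v, hv⟩
  refine ⟨y, fun v => ?_, fun i j hij hj => ?_⟩
  · obtain ⟨i, hi⟩ : f v ∈ Set.range e := by rw [Finset.range_orderEmbOfFin]; simp [s]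
    refine ⟨i, ⟨i.2, hf (by rw [hfy i i.2, hi])⟩, fun j ⟨hj, hjv⟩ => ?_⟩
    have : e ⟨j, hj⟩ = e i := by rw [← hfy j hj, hjv, hi]
    exact congrArg Fin.val (e.injective this)
  · rw [hfy i (by omega), hfy j hj]
    exact e.strictMono (Fin.mk_lt_mk.mpr hij)

lemma natAbs_sub_le_span (f : V → ℕ) (a b : V) : ((f a : ℤ) - f b).natAbs ≤ span f :=
  le_sup (f := fun p : V × V => ((f p.1 : ℤ) - f p.2).natAbs) (mem_univ (a, b))

lemma span_eq_of_forall_le {f : V → ℕ} {a b : V} (ha : f a = 0) (hb : ∀ v, f v ≤ f b) :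
    span f = f b := by
  refine le_antisymm (Finset.sup_le fun p _ => ?_) ?_
  · have := hb p.1
    have := hb p.2
    omega
  · have := natAbs_sub_le_span f b a
    omega

lemma IsRadioLabeling.injective (hG : G.ediam ≠ ⊤) {f : V → ℕ} (hf : IsRadioLabeling G f) :
    Injective f := by
  intro a b hab
  by_contra hne
  have hrad := hf a b hne
  have := dist_le_diam hG (u := a) (v := b)
  rw [hab, sub_self, Int.natAbs_zero] at hrad
  omega

lemma radioNumber_eq_of_isRadioLabeling {f : V → ℕ} {n : ℤ} (hf : IsRadioLabeling G f)
    (hspan : (span f : ℤ) = n) (hlow : ∀ f', IsRadioLabeling G f' → n ≤ span f') :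
    (radioNumber G : ℤ) = n := by
  obtain ⟨f', hf', h⟩ := Nat.sInf_mem (⟨span f, f, hf, rfl⟩ :
    {n | ∃ f : V → ℕ, IsRadioLabeling G f ∧ span f = n}.Nonempty)
  have : radioNumber G ≤ span f := Nat.sInf_le ⟨f, hf, rfl⟩
  have := hlow f' hf'
  rw [radioNumber, ← h] at *
  omega

lemma IsOrdering.exists_isRadioLabeling (hconn : G.Connected) {u : ℕ → V} (hu : IsOrdering u)
    {g : ℕ → ℤ} (hg0 : g 0 = 0)
    (hg : ∀ i j, i < j → j ≤ Fintype.card V - 1 →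
      (G.diam : ℤ) + 1 ≤ G.dist (u i) (u j) + (g j - g i)) :
    ∃ f : V → ℕ, IsRadioLabeling G f ∧ (span f : ℤ) = g (Fintype.card V - 1) := by
  have := hconn.nonempty
  have hdiam : ∀ a b, G.dist a b ≤ G.diam :=
    fun _ _ => dist_le_diam (connected_iff_ediam_ne_top.mp hconn)
  have hmono : ∀ i j, i ≤ j → j ≤ Fintype.card V - 1 → g i ≤ g j := by
    intro i j hij hj
    rcases hij.eq_or_lt with rfl | hlt
    · rfl
    have := hg i j hlt hj
    have := hdiam (u i) (u j)
    omega
  choose idx hidx_lt hidx using fun v => (hu v).exists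
  have hidx_le : ∀ v, idx v ≤ Fintype.card V - 1 := fun v => by have := hidx_lt v; omega
  have hidx_u : ∀ i < Fintype.card V, idx (u i) = i :=
    fun i hi => hu.injOn (hidx_lt _) hi (hidx _)
  obtain ⟨f, hf⟩ : ∃ f : V → ℕ, ∀ v, (f v : ℤ) = g (idx v) :=
    ⟨fun v => (g (idx v)).toNat,
      fun v => Int.toNat_of_nonneg (hg0 ▸ hmono 0 _ (Nat.zero_le _) (hidx_le v))⟩
  have hlast : idx (u (Fintype.card V - 1)) = Fintype.card V - 1 :=
    hidx_u _ (Nat.sub_lt Fintype.card_pos one_pos)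
  refine ⟨f, fun a b hab => ?_, ?_⟩
  · have hne : idx a ≠ idx b := fun h => hab (by rw [← hidx a, h, hidx b])
    wlog hlt : idx a < idx b generalizing a b
    · have := this b a hab.symm hne.symm (by omega)
      rwa [dist_comm, ← Int.natAbs_neg, neg_sub] at this
    have := hg (idx a) (idx b) hlt (hidx_le b)
    rw [hidx a, hidx b] at this
    have := hf a
    have := hf b
    omega
  · have h₀ := hf (u 0)
    have h₁ := hf (u (Fintype.card V - 1))
    rw [hidx_u 0 Fintype.card_pos, hg0] at h₀
    rw [hlast] at h₁
    rw [span_eq_of_forall_le (a := u 0) (b := u (Fintype.card V - 1)) (by omega) fun v => by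
      have := hmono _ _ (hidx_le v) le_rfl
      have := hf v
      omega, h₁]

lemma le_span_of_isRadioLabeling [Nontrivial V] (hT : G.IsTree) {f : V → ℕ}
    (hf : IsRadioLabeling G f) :
    ((Fintype.card V : ℤ) - 1) * (G.diam + epsilon G) - 2 * totalLevel G + epsilon G ≤
      span f := by
  have hdiam := connected_iff_ediam_ne_top.mp hT.connected
  obtain ⟨y, hy, hlt⟩ := exists_isOrdering_lt_of_lt (hf.injective hdiam)
  have hp := Fintype.one_lt_card (α := V)
  have hstep : ∀ t ∈ range (Fintype.card V - 1),
      (G.diam + epsilon G : ℤ) - (level G (y t) + level G (y (t + 1)) : ℤ) ≤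
        (f (y (t + 1)) : ℤ) - f (y t) := by
    intro t ht
    rw [mem_range] at ht
    have hlt := hlt t (t + 1) (by omega) (by omega)
    have := hf (y (t + 1)) (y t) fun h => hlt.ne' (congrArg f h)
    have := dist_add_epsilon_le hT (y (t + 1)) (y t)
    omega
  have hsum := sum_le_sum hstep
  rw [hy.sum_sub_consecutive_eq (fun v => (level G v : ℤ)),
    sum_range_sub (fun t => (f (y t) : ℤ))] at hsum
  have hends_lt := hlt 0 (Fintype.card V - 1) (by omega) (by omega)
  have hends := epsilon_le_level_add_level hT fun h => hends_lt.ne (congrArg f h)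
  have := natAbs_sub_le_span f (y (Fintype.card V - 1)) (y 0)
  simp only [totalLevel, Nat.cast_sum] at *
  omega

theorem radioNumber_tree_eq_of_order_general {V : Type*} [Fintype V]
    (G : SimpleGraph V) (hT : G.IsTree)
    (u : ℕ → V)
    (horder : ∀ v : V, ∃! i : ℕ, i < Fintype.card V ∧ u i = v)
    -- (a), one weight center case
    (ha1 : ∀ w : V, weightCenters G = {w} →
      u 0 = w ∧ G.Adj w (u (Fintype.card V - 1)))
    -- (a), two weight centers case
    (ha2 : ∀ w w' : V, w ≠ w' → weightCenters G = {w, w'} →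
      ({u 0, u (Fintype.card V - 1)} : Set V) = {w, w'})
    -- (b)
    (hb : ∀ i j : ℕ, i < j → j ≤ Fintype.card V - 1 →
      (∑ t ∈ Finset.Ico i j, ((level G (u t) : ℤ) + (level G (u (t + 1)) : ℤ)))
          - ((j : ℤ) - (i : ℤ)) * ((G.diam : ℤ) + (epsilon G : ℤ)) + ((G.diam : ℤ) + 1)
        ≤ (G.dist (u i) (u j) : ℤ)) :
    (radioNumber G : ℤ) =
      ((Fintype.card V : ℤ) - 1) * ((G.diam : ℤ) + (epsilon G : ℤ))
        - 2 * (totalLevel G : ℤ) + (epsilon G : ℤ) := by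
  have : Nontrivial V := ⟨⟨_, _, ne_of_endpoints hT ha1 ha2⟩⟩
  have hends := level_add_level_eq_epsilon_of_endpoints hT ha1 ha2
  set g : ℕ → ℤ := fun n => ∑ t ∈ range n,
    ((G.diam + epsilon G : ℤ) - ((level G (u t) : ℤ) + level G (u (t + 1))))
  have hgap : ∀ i j, i < j → g j - g i = (j - i) * (G.diam + epsilon G : ℤ) -
      ∑ t ∈ Ico i j, ((level G (u t) : ℤ) + level G (u (t + 1))) := fun i j hij => by
    simp only [g]
    rw [← sum_Ico_eq_sub _ hij.le, sum_sub_distrib, sum_const, Nat.card_Ico, nsmul_eq_mul,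
      Nat.cast_sub hij.le]
  obtain ⟨f, hf, hspan⟩ := IsOrdering.exists_isRadioLabeling hT.connected horder (g := g)
    (by simp [g]) fun i j hij hj => by linarith [hb i j hij hj, hgap i j hij]
  refine radioNumber_eq_of_isRadioLabeling hf (hspan.trans ?_)
    fun f' hf' => le_span_of_isRadioLabeling hT hf'
  dsimp only [g]
  rw [IsOrdering.sum_sub_consecutive_eq horder (fun v => (level G v : ℤ))]
  simp only [totalLevel, Nat.cast_sum]
  omega

/-- sufficiency part of the Bantva–Vaidya–Zhou characterization.
If there is a linear order `u 0, u 1, …, u (p-1)` of the vertices of the tree `T`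
satisfying conditions (a) and (b), then `rn(T) = (p-1)(d+ε) - 2 L(T) + ε`. -/
theorem radioNumber_tree_eq_of_order {V : Type*} [Fintype V]
    (G : SimpleGraph V) (hT : G.IsTree) (hd : 2 ≤ G.diam)
    (u : ℕ → V)
    (horder : ∀ v : V, ∃! i : ℕ, i < Fintype.card V ∧ u i = v)
    -- (a), one weight center case
    (ha1 : ∀ w : V, weightCenters G = {w} →
      u 0 = w ∧ G.Adj w (u (Fintype.card V - 1)))
    -- (a), two weight centers case
    (ha2 : ∀ w w' : V, w ≠ w' → weightCenters G = {w, w'} →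
      ({u 0, u (Fintype.card V - 1)} : Set V) = {w, w'})
    -- (b)
    (hb : ∀ i j : ℕ, i < j → j ≤ Fintype.card V - 1 →
      (∑ t ∈ Finset.Ico i j, ((level G (u t) : ℤ) + (level G (u (t + 1)) : ℤ)))
          - ((j : ℤ) - (i : ℤ)) * ((G.diam : ℤ) + (epsilon G : ℤ)) + ((G.diam : ℤ) + 1)
        ≤ (G.dist (u i) (u j) : ℤ)) :
    (radioNumber G : ℤ) =
      ((Fintype.card V : ℤ) - 1) * ((G.diam : ℤ) + (epsilon G : ℤ))
        - 2 * (totalLevel G : ℤ) + (epsilon G : ℤ) :=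
  radioNumber_tree_eq_of_order_general G hT u horder ha1 ha2 hb

end Radio
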